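/- Let X̂ be the k-DSM-CYC instance produced by the gadget reduction from a k-DSMI-CYC instance X, let μ̂ be a weakly stable matching of X̂, let t* ∈ {0,…,k−1} and α* ∈ I × {t*} be such that μ̂(0, α*, t*) does not appear in P̂'_{α*}, and let t ∈ {0,…,k−1} and j ∈ J with j ≤ (k−1)·(k−2). Then μ̂(j, α*, t) ∈ {0,…,j+k−1} × {α*} × {t ⊕ 1}. -/

import Mathlib

open Classical

/-- Cyclic successor on `Fin k` (addition of `1` modulo `k`). -/
def fsucc {k : ℕ} (t : Fin k) : Fin k := ⟨(t.1 + 1) % k, Nat.mod_lt _ t.pos⟩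

/-- Cyclic addition of a natural number, modulo `k`. -/
def fadd {k : ℕ} (t : Fin k) (s : ℕ) : Fin k := ⟨(t.1 + s) % k, Nat.mod_lt _ t.pos⟩

/-- An agent consists of an identifier and a type in `{0, …, k-1}`. -/
abbrev Agent (ι : Type) (k : ℕ) := ι × Fin k

/-- A preference profile of a `k`-DSMI-CYC instance over identifier set `ι`:
each agent has a list of agents. -/
abbrev Prefs (ι : Type) (k : ℕ) := Agent ι k → List (Agent ι k)

/-- Validity of a `k`-DSMI-CYC instance: each preference list is duplicate-free and
contains only agents of the cyclically next type. -/
def ValidPrefs {ι : Type} {k : ℕ} (P : Prefs ι k) : Prop :=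
  (∀ a, (P a).Nodup) ∧ ∀ a b, b ∈ P a → b.2 = fsucc a.2

/-- Completeness: every agent of the next type appears in the preference list
(this is the `k`-DSM-CYC special case). -/
def CompletePrefs {ι : Type} {k : ℕ} (P : Prefs ι k) : Prop :=
  ∀ a b : Agent ι k, b.2 = fsucc a.2 → b ∈ P a

/-- `a` prefers `b` to `c`: `b` appears in `a`'s list, and `c` appears later or not at all. -/
def Prefers {ι : Type} [DecidableEq ι] {k : ℕ} (P : Prefs ι k) (a b c : Agent ι k) : Prop :=
  b ∈ P a ∧ (c ∉ P a ∨ (P a).idxOf b < (P a).idxOf c)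

/-- A family: a `k`-tuple where the `t`-th member has type `t` and finds the next member
acceptable. -/
def IsFamily {ι : Type} {k : ℕ} (P : Prefs ι k) (F : Fin k → Agent ι k) : Prop :=
  ∀ t, (F t).2 = t ∧ F (fsucc t) ∈ P (F t)

/-- A matching: a set of pairwise agent-disjoint families. -/
def IsMatching {ι : Type} {k : ℕ} (P : Prefs ι k) (μ : Set (Fin k → Agent ι k)) : Prop :=
  (∀ F ∈ μ, IsFamily P F) ∧ ∀ F ∈ μ, ∀ F' ∈ μ, ∀ t, F t = F' t → F = F'

/-- The partner `μ(a)` of agent `a` in matching `μ`: the next member of a family of `μ`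
containing `a`, and `a` itself if `a` is unmatched. -/
noncomputable def partner {ι : Type} {k : ℕ} (μ : Set (Fin k → Agent ι k)) (a : Agent ι k) :
    Agent ι k :=
  if h : ∃ F ∈ μ, F a.2 = a then h.choose (fsucc a.2) else a

/-- A strongly blocking family of `μ`: each member prefers the next member to its partner. -/
def StronglyBlocks {ι : Type} [DecidableEq ι] {k : ℕ} (P : Prefs ι k)
    (μ : Set (Fin k → Agent ι k)) (F : Fin k → Agent ι k) : Prop :=
  IsFamily P F ∧ ∀ t, Prefers P (F t) (F (fsucc t)) (partner μ (F t))

/-- A weakly stable matching: a matching admitting no strongly blocking family. -/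
def WeaklyStable {ι : Type} [DecidableEq ι] {k : ℕ} (P : Prefs ι k)
    (μ : Set (Fin k → Agent ι k)) : Prop :=
  IsMatching P μ ∧ ∀ F, ¬ StronglyBlocks P μ F

/-- The identifier component `J = {0, …, (k−1)²}` of the gadget reduction. -/
abbrev JId (k : ℕ) := Fin ((k - 1) ^ 2 + 1)

/-- Identifiers of the gadget instance: `J × A`, where `A` is the agent set of the
input instance (with identifiers `{0, …, n−1}`, so that agents compare
lexicographically). -/
abbrev HatId (n k : ℕ) := JId k × Agent (Fin n) k

/-- `P̂'_α`: the preference list of `α` with every entry `α'` replaced by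
`(0, α', t ⊕ 1)`. -/
def hatP' {n k : ℕ} (P : Prefs (Fin n) k) (a : Agent (Fin n) k) :
    List (Agent (HatId n k) k) :=
  (P a).map fun b => (((0 : JId k), b), fsucc a.2)

/-- All agents `(j', a, t')` of the gadget of `a`, for `j' ∈ J` in increasing order. -/
def gadgetColumn {n k : ℕ} (a : Agent (Fin n) k) (t' : Fin k) :
    List (Agent (HatId n k) k) :=
  (List.finRange ((k - 1) ^ 2 + 1)).map fun j => ((j, a), t')

/-- The agents of the input instance in increasing lexicographic order. -/
def enumA (n k : ℕ) : List (Agent (Fin n) k) :=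
  (List.finRange n).flatMap fun i => (List.finRange k).map fun t => (i, t)

/-- The prescribed initial segment of the preference list of each agent of the gadget
instance: a non-dummy agent `(0, α, t)` (where `α` has type `t`) starts with `P̂'_α`
followed by its own gadget's next row; a boundary dummy agent `((k−1)², α, t)` starts
with its own gadget's next row (up to `j' < (k−1)²`) followed by all boundary agents of
the next type in increasing lexicographic order; a non-boundary dummy agent starts with
its own gadget's next row.  The rest of each preference list is arbitrary. -/
def gadgetPrefix {n k : ℕ} (P : Prefs (Fin n) k) (b : Agent (HatId n k) k) :
    List (Agent (HatId n k) k) :=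
  if b.1.1 = (0 : JId k) ∧ b.1.2.2 = b.2 then
    hatP' P b.1.2 ++ gadgetColumn b.1.2 (fsucc b.2)
  else if b.1.1 = Fin.last ((k - 1) ^ 2) then
    ((List.finRange ((k - 1) ^ 2)).map fun j => ((j.castSucc, b.1.2), fsucc b.2)) ++
      ((enumA n k).map fun a' => ((Fin.last ((k - 1) ^ 2), a'), fsucc b.2))
  else
    gadgetColumn b.1.2 (fsucc b.2)

/-- `Phat` is a `k`-DSM-CYC instance produced by the gadget reduction from `P`:
it is valid and complete, and each preference list begins with the prescribed
initial segment. -/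
def IsGadgetLift {n k : ℕ} (P : Prefs (Fin n) k) (Phat : Prefs (HatId n k) k) : Prop :=
  ValidPrefs Phat ∧ CompletePrefs Phat ∧ ∀ b, (gadgetPrefix P b).IsPrefix (Phat b)

/-! ### Auxiliary lemmas for the admirer lemma -/

lemma fsucc_ne {k : ℕ} (hk : 2 ≤ k) (t : Fin k) : fsucc t ≠ t := by
  intro h
  have h1 : (t.1 + 1) % k = t.1 := congrArg Fin.val h
  have ht := t.2
  rcases Nat.lt_or_ge (t.1 + 1) k with h2 | h2
  · rw [Nat.mod_eq_of_lt h2] at h1; omega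
  · have he : t.1 + 1 = k := by omega
    rw [he, Nat.mod_self] at h1
    omega

lemma fadd_zero {k : ℕ} (t : Fin k) : fadd t 0 = t := by
  apply Fin.ext
  show (t.1 + 0) % k = t.1
  rw [Nat.add_zero, Nat.mod_eq_of_lt t.2]

lemma fadd_succ {k : ℕ} (t : Fin k) (s : ℕ) : fadd t (s + 1) = fsucc (fadd t s) := by
  apply Fin.ext
  show (t.1 + (s + 1)) % k = ((t.1 + s) % k + 1) % k
  rw [Nat.mod_add_mod, Nat.add_assoc]

/-- Cyclic distance from `t` to `u`. -/
def dist {k : ℕ} (t u : Fin k) : ℕ := (u.1 + k - t.1) % k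

lemma dist_lt {k : ℕ} (t u : Fin k) : dist t u < k := Nat.mod_lt _ t.pos

lemma fadd_dist {k : ℕ} (t u : Fin k) : fadd t (dist t u) = u := by
  apply Fin.ext
  show (t.1 + (u.1 + k - t.1) % k) % k = u.1
  rw [Nat.add_mod_mod]
  have ht := t.2
  have e : t.1 + (u.1 + k - t.1) = u.1 + k := by omega
  rw [e, Nat.add_mod_right, Nat.mod_eq_of_lt u.2]

lemma dist_fadd {k : ℕ} (t : Fin k) (m : ℕ) : dist t (fadd t m) = m % k := by
  have ht := t.2
  show ((t.1 + m) % k + k - t.1) % k = m % k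
  have hr : (t.1 + m) % k < k := Nat.mod_lt _ t.pos
  have h1 : ((t.1 + m) % k + k - t.1) + t.1 = (t.1 + m) % k + k := by omega
  have h2 : ((t.1 + m) % k + k - t.1 + t.1) % k = (m + t.1) % k := by
    rw [h1, Nat.add_mod_right, Nat.mod_eq_of_lt hr, Nat.add_comm]
  exact Nat.ModEq.add_right_cancel' t.1 h2

lemma dist_fsucc {k : ℕ} (t u : Fin k) : dist t (fsucc u) = (dist t u + 1) % k := by
  have h : fsucc u = fadd t (dist t u + 1) := by rw [fadd_succ, fadd_dist]
  rw [h, dist_fadd]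

lemma partner_inj {ι : Type} {k : ℕ} {P : Prefs ι k} {μ : Set (Fin k → Agent ι k)}
    (hμ : IsMatching P μ) (hk : 2 ≤ k) {a b : Agent ι k} (hab : a.2 = b.2)
    (h : partner μ a = partner μ b) (hty : (partner μ a).2 = fsucc a.2) : a = b := by
  have hne := fsucc_ne hk a.2
  by_cases ha : ∃ F ∈ μ, F a.2 = a
  · by_cases hb : ∃ F ∈ μ, F b.2 = b
    · have hpa : partner μ a = ha.choose (fsucc a.2) := by unfold partner; rw [dif_pos ha]
      have hpb : partner μ b = hb.choose (fsucc b.2) := by unfold partner; rw [dif_pos hb]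
      obtain ⟨hFa, ha2⟩ := ha.choose_spec
      obtain ⟨hFb, hb2⟩ := hb.choose_spec
      have hfe : ha.choose (fsucc a.2) = hb.choose (fsucc a.2) := by
        rw [← hpa, h, hpb, hab]
      have hFF := hμ.2 _ hFa _ hFb (fsucc a.2) hfe
      calc a = ha.choose a.2 := ha2.symm
        _ = hb.choose a.2 := by rw [hFF]
        _ = hb.choose b.2 := by rw [hab]
        _ = b := hb2
    · have hpb : partner μ b = b := by unfold partner; rw [dif_neg hb]
      rw [h, hpb] at hty
      exact absurd ((hab.trans hty).symm) hne
  · have hpa : partner μ a = a := by unfold partner; rw [dif_neg ha]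
    rw [hpa] at hty
    exact absurd hty.symm hne

lemma column_not_mem_hatP' {n k : ℕ} (hk : 2 ≤ k) {P : Prefs (Fin n) k} (hP : ValidPrefs P)
    (astar : Agent (Fin n) k) (x : JId k) (u' : Fin k) :
    ((x, astar), u') ∉ hatP' P astar := by
  intro hmem
  simp only [hatP', List.mem_map] at hmem
  obtain ⟨b, hb, heq⟩ := hmem
  have hb2 : b = astar := congrArg (fun p => p.1.2) heq
  rw [hb2] at hb
  exact fsucc_ne hk astar.2 (hP.2 astar astar hb).symm

/-- Pin down the `BEq` instance on gadget agents to the one used by `Prefers`. -/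
@[reducible] instance (priority := 2000) hatAgentBEq {n k : ℕ} [DecidableEq (HatId n k)] :
    BEq (Agent (HatId n k) k) :=
  @instBEqProd (HatId n k) (Fin k) instBEqOfDecidableEq instBEqOfDecidableEq

instance (priority := 2000) hatAgentLawfulBEq {n k : ℕ} [inst : DecidableEq (HatId n k)] :
    @LawfulBEq (Agent (HatId n k) k) hatAgentBEq :=
  @Prod.instLawfulBEq (HatId n k) (Fin k) (@instBEqOfDecidableEq (HatId n k) inst)
    (@instBEqOfDecidableEq (Fin k) (instDecidableEqFin k))
    (@instLawfulBEq (HatId n k) inst) (@instLawfulBEq (Fin k) (instDecidableEqFin k))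

section MyIndexOf

variable {α : Type} [BEq α] [LawfulBEq α]

theorem my_indexOf_append_of_mem {a : α} {l₁ l₂ : List α} (h : a ∈ l₁) :
    (l₁ ++ l₂).idxOf a = l₁.idxOf a := by
  induction l₁ with
  | nil => cases h
  | cons b tl ih =>
    rw [List.cons_append, List.idxOf_cons, List.idxOf_cons]
    cases hb : b == a with
    | true => rfl
    | false =>
      have hmem : a ∈ tl := by
        rcases List.mem_cons.1 h with h1 | h1
        · exact absurd h1.symm (beq_eq_false_iff_ne.1 hb)
        · exact h1
      simp only [cond_false, ih hmem]

theorem my_indexOf_append_of_not_mem {a : α} {l₁ l₂ : List α} (h : a ∉ l₁) :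
    (l₁ ++ l₂).idxOf a = l₁.length + l₂.idxOf a := by
  induction l₁ with
  | nil => simp
  | cons b tl ih =>
    have hb : (b == a) = false := beq_eq_false_iff_ne.2 fun hba => h (hba ▸ List.mem_cons_self)
    have htl : a ∉ tl := fun hmem => h (List.mem_cons_of_mem _ hmem)
    rw [List.cons_append, List.idxOf_cons, hb, cond_false, ih htl, List.length_cons]
    omega

theorem my_indexOf_getElem {l : List α} (H : l.Nodup) (i : ℕ) (h : i < l.length) :
    l.idxOf l[i] = i := by
  induction l generalizing i with
  | nil => simp at h
  | cons b tl ih =>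
    rcases i with _ | i
    · simp [List.idxOf_cons]
    · have hlen : i < tl.length := by simpa using h
      have hget : (b :: tl)[i + 1] = tl[i] := by simp
      have hne : (b == tl[i]) = false :=
        beq_eq_false_iff_ne.2 fun hbe => (List.nodup_cons.1 H).1 (hbe ▸ List.getElem_mem hlen)
      rw [hget, List.idxOf_cons, hne, cond_false, ih (List.nodup_cons.1 H).2 i hlen]

end MyIndexOf

lemma indexOf_map_finRange {N : ℕ} {β : Type} [BEq β] [LawfulBEq β] {f : Fin N → β}
    (hf : Function.Injective f) (j : Fin N) :
    ((List.finRange N).map f).idxOf (f j) = j.1 := by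
  have hnd : ((List.finRange N).map f).Nodup := (List.nodup_finRange N).map hf
  have hlen : j.1 < ((List.finRange N).map f).length := by simpa using j.2
  have hget : ((List.finRange N).map f)[j.1] = f j := by simp
  rw [← hget]
  exact my_indexOf_getElem hnd _ hlen

lemma gadgetColumn_inj {n k : ℕ} (a : Agent (Fin n) k) (t' : Fin k) :
    Function.Injective fun j : JId k => ((j, a), t') :=
  fun x y h => congrArg (fun p : Agent (HatId n k) k => p.1.1) h

lemma mem_gadgetColumn {n k : ℕ} {a : Agent (Fin n) k} {t' : Fin k}
    {x : Agent (HatId n k) k} :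
    x ∈ gadgetColumn a t' ↔ ∃ w : JId k, x = ((w, a), t') := by
  simp only [gadgetColumn, List.mem_map, List.mem_finRange, true_and]
  exact ⟨fun ⟨w, hw⟩ => ⟨w, hw.symm⟩, fun ⟨w, hw⟩ => ⟨w, hw.symm⟩⟩

lemma indexOf_gadgetColumn {n k : ℕ} [DecidableEq (HatId n k)] (a : Agent (Fin n) k) (t' : Fin k) (w : JId k) :
    (gadgetColumn a t').idxOf ((w, a), t') = w.1 := by
  unfold gadgetColumn
  exact indexOf_map_finRange (gadgetColumn_inj a t') w

lemma length_gadgetColumn {n k : ℕ} (a : Agent (Fin n) k) (t' : Fin k) :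
    (gadgetColumn a t').length = (k - 1) ^ 2 + 1 := by
  simp [gadgetColumn]

lemma lt_indexOf_column {n k : ℕ} [DecidableEq (HatId n k)] (astar : Agent (Fin n) k) (t' : Fin k) (g'' : JId k)
    (c : Agent (HatId n k) k) (r : List (Agent (HatId n k) k))
    (hcol : ∀ w : JId k, c = ((w, astar), t') → g''.1 < w.1) :
    (gadgetColumn astar t' ++ r).idxOf ((g'', astar), t') <
      (gadgetColumn astar t' ++ r).idxOf c := by
  have hmem : ((g'', astar), t') ∈ gadgetColumn astar t' := mem_gadgetColumn.2 ⟨g'', rfl⟩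
  rw [my_indexOf_append_of_mem hmem, indexOf_gadgetColumn]
  by_cases hc : c ∈ gadgetColumn astar t'
  · obtain ⟨w, rfl⟩ := mem_gadgetColumn.1 hc
    rw [my_indexOf_append_of_mem hc, indexOf_gadgetColumn]
    exact hcol w rfl
  · rw [my_indexOf_append_of_not_mem hc, length_gadgetColumn]
    exact lt_of_lt_of_le g''.2 (Nat.le_add_right _ _)

lemma gadgetPrefix_eqA {n k : ℕ} (P : Prefs (Fin n) k) (g : JId k)
    (a : Agent (Fin n) k) (t' : Fin k) (h1 : g = 0) (h2 : a.2 = t') :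
    gadgetPrefix P ((g, a), t') = hatP' P a ++ gadgetColumn a (fsucc t') := by
  unfold gadgetPrefix
  have hc : ((((g, a), t') : Agent (HatId n k) k)).1.1 = (0 : JId k) ∧
      ((((g, a), t') : Agent (HatId n k) k)).1.2.2 = ((((g, a), t') : Agent (HatId n k) k)).2 :=
    ⟨h1, h2⟩
  rw [if_pos hc]

lemma gadgetPrefix_eqB {n k : ℕ} (P : Prefs (Fin n) k) (g : JId k)
    (a : Agent (Fin n) k) (t' : Fin k) (h1 : ¬(g = 0 ∧ a.2 = t'))
    (h2 : g = Fin.last ((k - 1) ^ 2)) :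
    gadgetPrefix P ((g, a), t') =
      ((List.finRange ((k - 1) ^ 2)).map fun j => ((j.castSucc, a), fsucc t')) ++
        ((enumA n k).map fun a' => ((Fin.last ((k - 1) ^ 2), a'), fsucc t')) := by
  unfold gadgetPrefix
  rw [if_neg (show ¬(((((g, a), t') : Agent (HatId n k) k)).1.1 = (0 : JId k) ∧
      ((((g, a), t') : Agent (HatId n k) k)).1.2.2 =
        ((((g, a), t') : Agent (HatId n k) k)).2) from h1),
    if_pos (show ((((g, a), t') : Agent (HatId n k) k)).1.1 = Fin.last ((k - 1) ^ 2) from h2)]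

lemma gadgetPrefix_eqC {n k : ℕ} (P : Prefs (Fin n) k) (g : JId k)
    (a : Agent (Fin n) k) (t' : Fin k) (h1 : ¬(g = 0 ∧ a.2 = t'))
    (h2 : g ≠ Fin.last ((k - 1) ^ 2)) :
    gadgetPrefix P ((g, a), t') = gadgetColumn a (fsucc t') := by
  unfold gadgetPrefix
  rw [if_neg (show ¬(((((g, a), t') : Agent (HatId n k) k)).1.1 = (0 : JId k) ∧
      ((((g, a), t') : Agent (HatId n k) k)).1.2.2 =
        ((((g, a), t') : Agent (HatId n k) k)).2) from h1),
    if_neg (show ¬((((g, a), t') : Agent (HatId n k) k)).1.1 = Fin.last ((k - 1) ^ 2) from h2)]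

lemma prefers_core {n k : ℕ} [DecidableEq (HatId n k)] (hk : 3 ≤ k) (P : Prefs (Fin n) k) (hP : ValidPrefs P)
    (Phat : Prefs (HatId n k) k) (hlift : IsGadgetLift P Phat)
    (astar : Agent (Fin n) k) (t' : Fin k) (g g'' : JId k) (c : Agent (HatId n k) k)
    (hbd : g.1 = (k - 1) ^ 2 → g''.1 < (k - 1) ^ 2)
    (hA : astar.2 = t' → g = 0 → c ∉ hatP' P astar)
    (hcol : ∀ w : JId k, c = ((w, astar), fsucc t') → g''.1 < w.1) :
    Prefers Phat ((g, astar), t') ((g'', astar), fsucc t') c := by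
  have hk2 : 2 ≤ k := by omega
  obtain ⟨r, hr⟩ := hlift.2.2 ((g, astar), t')
  refine ⟨hlift.2.1 _ _ rfl, Or.inr ?_⟩
  rw [← hr]
  by_cases h1 : g = (0 : JId k) ∧ astar.2 = t'
  · rw [gadgetPrefix_eqA P g astar t' h1.1 h1.2]
    have hcnp : c ∉ hatP' P astar := hA h1.2 h1.1
    have htnp : ((g'', astar), fsucc t') ∉ hatP' P astar :=
      column_not_mem_hatP' hk2 hP astar g'' (fsucc t')
    rw [List.append_assoc, my_indexOf_append_of_not_mem htnp,
      my_indexOf_append_of_not_mem hcnp]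
    exact Nat.add_lt_add_left (lt_indexOf_column astar (fsucc t') g'' c r hcol) _
  · by_cases h2 : g = Fin.last ((k - 1) ^ 2)
    · rw [gadgetPrefix_eqB P g astar t' h1 h2]
      have hg'' : g''.1 < (k - 1) ^ 2 := hbd (by rw [h2]; rfl)
      have hgc : ((⟨g''.1, hg''⟩ : Fin ((k - 1) ^ 2)).castSucc : JId k) = g'' := Fin.ext rfl
      have hinj : Function.Injective
          (fun j : Fin ((k - 1) ^ 2) => (((j.castSucc : JId k), astar), fsucc t')) := by
        intro x y h
        have hxy : (x.castSucc : JId k) = y.castSucc :=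
          congrArg (fun p : Agent (HatId n k) k => p.1.1) h
        exact Fin.castSucc_injective _ hxy
      have hmem : ((g'', astar), fsucc t') ∈
          (List.finRange ((k - 1) ^ 2)).map
            fun j : Fin ((k - 1) ^ 2) => (((j.castSucc : JId k), astar), fsucc t') := by
        refine List.mem_map.2 ⟨⟨g''.1, hg''⟩, List.mem_finRange _, ?_⟩
        rw [hgc]
      rw [List.append_assoc, my_indexOf_append_of_mem hmem]
      conv_lhs => rw [← hgc]
      rw [indexOf_map_finRange hinj ⟨g''.1, hg''⟩]
      by_cases hc : c ∈ (List.finRange ((k - 1) ^ 2)).map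
          fun j : Fin ((k - 1) ^ 2) => (((j.castSucc : JId k), astar), fsucc t')
      · obtain ⟨w', _, hw'⟩ := List.mem_map.1 hc
        rw [my_indexOf_append_of_mem hc, ← hw', indexOf_map_finRange hinj w']
        have := hcol w'.castSucc hw'.symm
        simpa using this
      · rw [my_indexOf_append_of_not_mem hc, List.length_map, List.length_finRange]
        exact lt_of_lt_of_le hg'' (Nat.le_add_right _ _)
    · rw [gadgetPrefix_eqC P g astar t' h1 h2]
      exact lt_indexOf_column astar (fsucc t') g'' c r hcol

lemma pigeonhole {n k : ℕ} (hk : 2 ≤ k) {Phat : Prefs (HatId n k) k}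
    {μ : Set (Fin k → Agent (HatId n k) k)} (hμ : IsMatching Phat μ)
    (astar : Agent (Fin n) k) (u : Fin k) (M : ℕ) (hM : M ≤ (k - 1) ^ 2) :
    ∃ x : JId k, x.1 ≤ M ∧ ∀ w : JId k,
      partner μ ((x, astar), u) = ((w, astar), fsucc u) → M ≤ w.1 := by
  by_contra hcon
  push_neg at hcon
  have hMk : ∀ m : Fin (M + 1), m.1 < (k - 1) ^ 2 + 1 :=
    fun m => Nat.lt_succ_of_le (le_trans (Nat.lt_succ_iff.mp m.2) hM)
  have hsel : ∀ m : Fin (M + 1), ∃ w : JId k,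
      partner μ (((⟨m.1, hMk m⟩ : JId k), astar), u) = ((w, astar), fsucc u) ∧ w.1 < M :=
    fun m => hcon _ (Nat.lt_succ_iff.mp m.2)
  choose W hW1 hW2 using hsel
  have hinj : Function.Injective (fun m : Fin (M + 1) => (⟨(W m).1, hW2 m⟩ : Fin M)) := by
    intro m1 m2 h
    have h' : (⟨(W m1).1, hW2 m1⟩ : Fin M) = ⟨(W m2).1, hW2 m2⟩ := h
    have hval := congrArg Fin.val h'
    have hww : W m1 = W m2 := Fin.ext hval
    have hpp : partner μ (((⟨m1.1, hMk m1⟩ : JId k), astar), u) =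
        partner μ (((⟨m2.1, hMk m2⟩ : JId k), astar), u) := by
      rw [hW1 m1, hW1 m2, hww]
    have hab : ((((⟨m1.1, hMk m1⟩ : JId k), astar), u) : Agent (HatId n k) k) =
        ((((⟨m2.1, hMk m2⟩ : JId k), astar), u) : Agent (HatId n k) k) :=
      partner_inj hμ hk rfl hpp (by rw [hW1 m1])
    have hval2 : m1.1 = m2.1 := congrArg (fun p : Agent (HatId n k) k => p.1.1.1) hab
    exact Fin.ext hval2
  have hcard := Fintype.card_le_of_injective _ hinj
  simp only [Fintype.card_fin] at hcard
  omega

/-- (Admirer lemma.)  Let `μ̂` be a weakly stable matching of the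
gadget instance, and suppose the non-dummy agent `(0, α*, t*)` (where `α*` has type
`t*`) is matched to an agent not in `P̂'_{α*}`.  Then for every type `t` and every
`j ≤ (k−1)(k−2)`, the partner of `(j, α*, t)` lies in
`{0, …, j+k−1} × {α*} × {t ⊕ 1}`. -/
theorem gadget_admirer {n k : ℕ} (hk : 3 ≤ k) (P : Prefs (Fin n) k)
    (hP : ValidPrefs P) (Phat : Prefs (HatId n k) k) (hlift : IsGadgetLift P Phat)
    (μhat : Set (Fin k → Agent (HatId n k) k)) (hμ : WeaklyStable Phat μhat)
    (tstar : Fin k) (astar : Agent (Fin n) k) (hty : astar.2 = tstar)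
    (hnp : partner μhat (((0 : JId k), astar), tstar) ∉ hatP' P astar)
    (t : Fin k) (j : JId k) (hj : j.1 ≤ (k - 1) * (k - 2)) :
    (partner μhat ((j, astar), t)).1.1.1 ≤ j.1 + k - 1 ∧
      (partner μhat ((j, astar), t)).1.2 = astar ∧
      (partner μhat ((j, astar), t)).2 = fsucc t := by
  by_contra hcon
  have hk2 : 2 ≤ k := by omega
  have hN : j.1 + k - 1 ≤ (k - 1) ^ 2 ∧ j.1 < (k - 1) ^ 2 := by
    obtain ⟨m, rfl⟩ : ∃ m, k = m + 3 := ⟨k - 3, by omega⟩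
    have hj' : j.1 ≤ (m + 2) * (m + 1) := hj
    show j.1 + (m + 3) - 1 ≤ (m + 2) ^ 2 ∧ j.1 < (m + 2) ^ 2
    have e3 : (m + 2) ^ 2 = (m + 2) * (m + 1) + (m + 2) := by ring
    rw [e3]
    generalize (m + 2) * (m + 1) = q at hj' ⊢
    omega
  obtain ⟨hN1, hN2⟩ := hN
  have hBad0 : ∀ w : JId k, partner μhat ((j, astar), t) = ((w, astar), fsucc t) →
      j.1 + k ≤ w.1 := by
    intro w hw
    by_contra hlt
    push_neg at hlt
    refine hcon ?_
    rw [hw]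
    exact ⟨by show w.1 ≤ j.1 + k - 1; omega, rfl, rfl⟩
  have hPH : ∀ s : ℕ, ∃ x : JId k, 1 ≤ s → s ≤ k - 1 →
      (x.1 ≤ j.1 + k - s ∧ ∀ w : JId k,
        partner μhat ((x, astar), fadd t s) = ((w, astar), fsucc (fadd t s)) →
          j.1 + k - s ≤ w.1) := by
    intro s
    by_cases hs : 1 ≤ s ∧ s ≤ k - 1
    · obtain ⟨x, hx1, hx2⟩ := pigeonhole hk2 hμ.1 astar (fadd t s) (j.1 + k - s)
        (le_trans (by omega) hN1)
      exact ⟨x, fun _ _ => ⟨hx1, hx2⟩⟩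
    · exact ⟨j, fun hs1 hs2 => absurd ⟨hs1, hs2⟩ hs⟩
  choose W hW using hPH
  obtain ⟨G, hG⟩ : ∃ G : Fin k → JId k, ∀ u,
      (dist t u = 0 → G u = j) ∧ (dist t u ≠ 0 → G u = W (dist t u)) :=
    ⟨fun u => if dist t u = 0 then j else W (dist t u),
      fun u => ⟨fun h => if_pos h, fun h => if_neg h⟩⟩
  refine hμ.2 (fun u => ((G u, astar), u)) ⟨fun u => ⟨rfl, hlift.2.1 _ _ rfl⟩, fun u => ?_⟩
  show Prefers Phat ((G u, astar), u) ((G (fsucc u), astar), fsucc u)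
      (partner μhat ((G u, astar), u))
  have hdlt := dist_lt t u
  rcases Nat.eq_zero_or_pos (dist t u) with hs0 | hspos
  · have hut : t = u := by rw [← fadd_dist t u, hs0, fadd_zero]
    subst hut
    have hGu : G t = j := (hG t).1 hs0
    have h1 : dist t (fsucc t) = 1 := by
      rw [dist_fsucc, hs0]
      exact Nat.mod_eq_of_lt (by omega)
    have hGsu : G (fsucc t) = W 1 := by
      rw [(hG (fsucc t)).2 (by rw [h1]; omega), h1]
    obtain ⟨hW1le, hW1bad⟩ := hW 1 le_rfl (by omega)
    rw [hGu, hGsu]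
    refine prefers_core hk P hP Phat hlift astar t j (W 1) _ ?_ ?_ ?_
    · intro h
      exact absurd h (Nat.ne_of_lt hN2)
    · intro ha hj0
      rw [hj0, show t = tstar from ha.symm.trans hty]
      exact hnp
    · intro w hw
      have hb := hBad0 w hw
      omega
  · have hs1 : 1 ≤ dist t u := hspos
    have hGu : G u = W (dist t u) := (hG u).2 (by omega)
    obtain ⟨hWle, hWbad⟩ := hW (dist t u) hs1 (by omega)
    rw [fadd_dist t u] at hWbad
    by_cases hlast : dist t u = k - 1
    · have h0 : dist t (fsucc u) = 0 := by
        rw [dist_fsucc, hlast, show k - 1 + 1 = k from by omega, Nat.mod_self]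
      have hGsu : G (fsucc u) = j := (hG (fsucc u)).1 h0
      rw [hGu, hGsu]
      refine prefers_core hk P hP Phat hlift astar u (W (dist t u)) j _ ?_ ?_ ?_
      · intro _
        exact hN2
      · intro ha hW0
        rw [hW0, show u = tstar from ha.symm.trans hty]
        exact hnp
      · intro w hw
        have hb := hWbad w hw
        omega
    · have hne : (dist t u + 1) % k = dist t u + 1 := Nat.mod_eq_of_lt (by omega)
      have hdsu : dist t (fsucc u) = dist t u + 1 := by rw [dist_fsucc, hne]
      have hGsu : G (fsucc u) = W (dist t u + 1) := by
        rw [(hG (fsucc u)).2 (by rw [hdsu]; omega), hdsu]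
      obtain ⟨hWle2, _⟩ := hW (dist t u + 1) (by omega) (by omega)
      rw [hGu, hGsu]
      refine prefers_core hk P hP Phat hlift astar u (W (dist t u)) (W (dist t u + 1)) _ ?_ ?_ ?_
      · intro _
        calc (W (dist t u + 1)).1 ≤ j.1 + k - (dist t u + 1) := hWle2
          _ < j.1 + k - 1 := by omega
          _ ≤ (k - 1) ^ 2 := hN1
      · intro ha hW0
        rw [hW0, show u = tstar from ha.symm.trans hty]
        exact hnp
      · intro w hw
        have hb := hWbad w hw
        omega
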